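/- The function f(z) = (e^{2z+1} + e^{-(2z+1)})/2 satisfies f(z)^2 - (1/100)(3f'(z+c) + 2f''(z))^2 = 1 for all z ∈ ℂ, whenever c ∈ ℂ satisfies e^{2c} = 1/3. -/

import Mathlib

/-!
The function is `f z = cosh (2 z + 1)`, so with `w = 2 z + 1` we have
`f' (z + c) = 2 sinh (w + 2 c)` and `f'' z = 4 cosh w`. From `exp (2 c) = 1 / 3` one gets
`cosh (2 c) = 5 / 3` and `sinh (2 c) = -4 / 3`, so by the addition formula
`3 f' (z + c) + 2 f'' z = 10 sinh w`, and the identity becomes `cosh w ^ 2 - sinh w ^ 2 = 1`.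
-/

open Complex

namespace Complex

theorem hasDerivAt_cosh_mul_add (a b z : ℂ) :
    HasDerivAt (fun z => cosh (a * z + b)) (a * sinh (a * z + b)) z := by
  simpa [mul_comm] using (((hasDerivAt_id z).const_mul a).add_const b).ccosh

theorem hasDerivAt_sinh_mul_add (a b z : ℂ) :
    HasDerivAt (fun z => sinh (a * z + b)) (a * cosh (a * z + b)) z := by
  simpa [mul_comm] using (((hasDerivAt_id z).const_mul a).add_const b).csinh

theorem deriv_cosh_mul_add (a b : ℂ) :
    deriv (fun z => cosh (a * z + b)) = fun z => a * sinh (a * z + b) :=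
  funext fun z => (hasDerivAt_cosh_mul_add a b z).deriv

theorem iteratedDeriv_two_cosh_mul_add (a b : ℂ) :
    iteratedDeriv 2 (fun z => cosh (a * z + b)) = fun z => a ^ 2 * cosh (a * z + b) := by
  rw [iteratedDeriv_succ, iteratedDeriv_one, deriv_cosh_mul_add]
  funext z
  rw [((hasDerivAt_sinh_mul_add a b z).const_mul a).deriv]
  ring

theorem cosh_eq_of_exp_eq {u q : ℂ} (h : exp u = q) : cosh u = (q + q⁻¹) / 2 := by
  rw [cosh, exp_neg, h]

theorem sinh_eq_of_exp_eq {u q : ℂ} (h : exp u = q) : sinh u = (q - q⁻¹) / 2 := by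
  rw [sinh, exp_neg, h]

end Complex

theorem stmt_5 (f : ℂ → ℂ)
    (hf : ∀ z : ℂ, f z = (Complex.exp (2 * z + 1) + Complex.exp (-(2 * z + 1))) / 2)
    (c : ℂ) (hc : Complex.exp (2 * c) = 1 / 3) :
    ∀ z : ℂ, (f z) ^ 2
      - (1 / 100) * (3 * deriv f (z + c) + 2 * iteratedDeriv 2 f z) ^ 2 = 1 := by
  have hf_cosh : f = fun z => cosh (2 * z + 1) := funext fun z => by rw [hf, cosh]
  have hcosh : cosh (2 * c) = 5 / 3 := by rw [cosh_eq_of_exp_eq hc]; norm_num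
  have hsinh : sinh (2 * c) = -4 / 3 := by rw [sinh_eq_of_exp_eq hc]; norm_num
  intro z
  have hshift :
      sinh (2 * (z + c) + 1) = sinh (2 * z + 1) * (5 / 3) + cosh (2 * z + 1) * (-4 / 3) := by
    rw [show 2 * (z + c) + 1 = (2 * z + 1) + 2 * c by ring, sinh_add, hcosh, hsinh]
  simp only [hf_cosh, deriv_cosh_mul_add, iteratedDeriv_two_cosh_mul_add, hshift]
  linear_combination cosh_sq_sub_sinh_sq (2 * z + 1)
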